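/- arXiv:math/9903019 — 3 statements merged into one kernel-verified Lean document; each statement's English description precedes it below -/
import Mathlib

section
/- For positive integers l, r, n, s, and fixed i with 1 ≤ i ≤ l, and fixed positive integers r_1, ..., r_l summing to r, the sum over all compositions (μ_1, ..., μ_l) of n into positive parts of the product C(μ_1-1, r_1-1) ··· C(μ_l-1, r_l-1) · C(μ_i+s-1, s) equals (-1)^(r_i-1) · C(-s-1, r_i-1) · C(n+s-1, r+s-1). -/
/-!
Write `q = r - 1`. A summand vanishes unless `μ ≥ r` pointwise, so put `μ = x + r` with
`∑ x = n - ∑ r`; the summand becomes `∏ C(q_j + x_j, q_j) · C(q_i + x_i + s, s)`. Trinomial revision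
`C(q + x, q) C(q + x + s, s) = C(q + s, q) C(q + s + x, q + s)` turns it into
`C(q_i + s, q_i) ∏ C(c_j + x_j, c_j)` with `c = q + s e_i`. As `∑ₓ C(c + x, c) Xˣ = (1 - X)^-(c+1)`,
the sum of these products over `∑ x = m` is the coefficient of `Xᵐ` in `(1 - X)^-(∑ c + l)`, namely
`C(∑ c + l - 1 + m, ∑ c + l - 1)`. Finally `(-1)ᵏ C(-s-1, k) = C(s + k, k)`.
-/

/-- The generalized binomial coefficient `C(x, k) = x(x-1)⋯(x-k+1)/k!` for rational `x`. -/
def gchoose (x : ℚ) (k : ℕ) : ℚ := (∏ i ∈ Finset.range k, (x - i)) / (Nat.factorial k)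

open Finset Finset.Nat PowerSeries

theorem Nat.add_choose_mul_add_add_choose (q x s : ℕ) :
    (q + x).choose q * (q + x + s).choose s = (q + s).choose q * (q + s + x).choose (q + s) := by
  have key : ((q + x).choose q * (q + x + s).choose s : ℚ) =
      (q + s).choose q * (q + s + x).choose (q + s) := by
    rw [← Nat.choose_symm_add, Nat.cast_add_choose, Nat.cast_add_choose, Nat.cast_add_choose,
      Nat.cast_add_choose, add_right_comm q x s]
    field_simp
  exact_mod_cast key

theorem Finset.Nat.sum_antidiagonalTuple_succ {M : Type*} [AddCommMonoid M] (k n : ℕ)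
    (f : (Fin (k + 1) → ℕ) → M) :
    ∑ x ∈ antidiagonalTuple (k + 1) n, f x =
      ∑ p ∈ antidiagonal n, ∑ x ∈ antidiagonalTuple k p.2, f (Fin.cons p.1 x) := by
  simp only [sum_eq_multiset_sum]
  change (Multiset.map f (Multiset.ofList (List.Nat.antidiagonalTuple (k + 1) n))).sum =
    (Multiset.map _ (Multiset.ofList (List.Nat.antidiagonal n))).sum
  simp only [List.Nat.antidiagonalTuple, List.flatMap, Multiset.map_coe, List.map_flatten,
    List.map_map, Function.comp_def, Multiset.sum_coe, List.sum_flatten, sum_map_val]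
  rfl

theorem PowerSeries.coeff_prod_univ_eq_sum_antidiagonalTuple {R : Type*} [CommSemiring R]
    (k n : ℕ) (f : Fin k → R⟦X⟧) :
    coeff n (∏ j, f j) = ∑ x ∈ antidiagonalTuple k n, ∏ j, coeff (x j) (f j) := by
  induction k generalizing n with
  | zero => cases n <;> simp [coeff_one]
  | succ k ih =>
    simp only [Fin.prod_univ_succ, coeff_mul, ih, sum_antidiagonalTuple_succ, mul_sum,
      Fin.cons_zero, Fin.cons_succ]

theorem PowerSeries.prod_invOneSubPow {S ι : Type*} [CommRing S] (s : Finset ι) (d : ι → ℕ) :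
    ∏ j ∈ s, invOneSubPow S (d j) = invOneSubPow S (∑ j ∈ s, d j) := by
  simp only [invOneSubPow_eq_inv_one_sub_pow, prod_pow_eq_pow_sum]

theorem Finset.Nat.sum_antidiagonalTuple_prod_add_choose (k m : ℕ) (c : Fin (k + 1) → ℕ) :
    ∑ x ∈ antidiagonalTuple (k + 1) m, ∏ j, (c j + x j).choose (c j) =
      (∑ j, c j + k + m).choose (∑ j, c j + k) := by
  have hsum : ∑ j, (c j + 1) = ∑ j, c j + k + 1 := by
    simp only [sum_add_distrib, sum_const, card_univ, Fintype.card_fin, smul_eq_mul, mul_one,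
      add_assoc]
  have key := congrArg (fun u : (ℤ⟦X⟧)ˣ => coeff m u.val)
    (prod_invOneSubPow (S := ℤ) univ fun j => c j + 1)
  simp only [Units.coe_prod, coeff_prod_univ_eq_sum_antidiagonalTuple,
    invOneSubPow_val_succ_eq_mk_add_choose, coeff_mk, hsum] at key
  exact_mod_cast key

theorem Finset.Nat.sum_antidiagonalTuple_add_right {M : Type*} [AddCommMonoid M] (k m : ℕ)
    (a : Fin k → ℕ) (f : (Fin k → ℕ) → M) :
    ∑ x ∈ antidiagonalTuple k m, f (x + a) =
      ∑ y ∈ (antidiagonalTuple k (m + ∑ j, a j)).filter (fun y => ∀ j, a j ≤ y j), f y := by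
  refine sum_nbij' (· + a) (· - a) (fun x hx => ?_) (fun y hy => ?_) (fun x _ => ?_)
    (fun y hy => ?_) (fun _ _ => rfl)
  · simp only [mem_filter, mem_antidiagonalTuple] at hx ⊢
    simp [sum_add_distrib, hx]
  · simp only [mem_filter, mem_antidiagonalTuple] at hy ⊢
    rw [Pi.sub_def, sum_tsub_distrib _ fun j _ => hy.2 j, hy.1, Nat.add_sub_cancel]
  · exact add_tsub_cancel_right x a
  · exact tsub_add_cancel_of_le (mem_filter.1 hy).2

theorem Finset.Nat.sum_antidiagonalTuple_prod_add_choose_mul_add_choose (k m s : ℕ)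
    (q : Fin (k + 1) → ℕ) (i : Fin (k + 1)) :
    ∑ x ∈ antidiagonalTuple (k + 1) m, (∏ j, (q j + x j).choose (q j)) * (q i + x i + s).choose s =
      (q i + s).choose (q i) * (∑ j, q j + s + k + m).choose (∑ j, q j + s + k) := by
  set c := q + Pi.single i s with hc
  have hterm (x : Fin (k + 1) → ℕ) :
      (∏ j, (q j + x j).choose (q j)) * (q i + x i + s).choose s =
        (q i + s).choose (q i) * ∏ j, (c j + x j).choose (c j) := by
    have hci : c i = q i + s := by simp [hc]
    have hrest : ∏ j ∈ {i}ᶜ, (c j + x j).choose (c j) = ∏ j ∈ {i}ᶜ, (q j + x j).choose (q j) :=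
      prod_congr rfl fun j hj => by
        have hji : j ≠ i := by simpa using hj
        simp [hc, hji]
    rw [Fintype.prod_eq_mul_prod_compl i, Fintype.prod_eq_mul_prod_compl i, hci, hrest,
      mul_right_comm, Nat.add_choose_mul_add_add_choose, mul_assoc]
  have hsum : ∑ j, c j = ∑ j, q j + s := by simp [hc, sum_add_distrib]
  rw [sum_congr rfl fun x _ => hterm x, ← mul_sum, sum_antidiagonalTuple_prod_add_choose, hsum]

section Compositions

variable {k : ℕ} (n s : ℕ) (r : Fin (k + 1) → ℕ) (i : Fin (k + 1))

theorem sum_filter_le_prod_choose_sub_one_mul_choose (hn : 1 ≤ n) (hr : ∀ j, 1 ≤ r j) :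
    ∑ μ ∈ (antidiagonalTuple (k + 1) n).filter (fun μ => ∀ j, r j ≤ μ j),
        (∏ j, (μ j - 1).choose (r j - 1)) * (μ i + s - 1).choose s =
      (s + (r i - 1)).choose (r i - 1) * (n + s - 1).choose (∑ j, r j + s - 1) := by
  rcases le_or_gt (∑ j, r j) n with hle | hlt
  · obtain ⟨m, rfl⟩ := Nat.exists_eq_add_of_le' hle
    have hshift : ∀ x : Fin (k + 1) → ℕ, ∀ j, x j + r j - 1 = r j - 1 + x j :=
      fun x j => by have := hr j; omega
    have hshift_i : ∀ x : Fin (k + 1) → ℕ, x i + r i + s - 1 = r i - 1 + x i + s :=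
      fun x => by have := hr i; omega
    have hsum : ∑ j, (r j - 1) + (k + 1) = ∑ j, r j := by
      have := sum_congr rfl fun j (_ : j ∈ univ) => Nat.sub_add_cancel (hr j)
      simpa [sum_add_distrib] using this
    simp only [← sum_antidiagonalTuple_add_right, Pi.add_apply, hshift, hshift_i]
    rw [sum_antidiagonalTuple_prod_add_choose_mul_add_choose k m s (fun j => r j - 1) i,
      add_comm (r i - 1) s]
    congr 2 <;> omega
  · rw [Nat.choose_eq_zero_of_lt (show n + s - 1 < ∑ j, r j + s - 1 by omega), mul_zero]
    refine sum_eq_zero fun μ hμ => ?_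
    rw [mem_filter, mem_antidiagonalTuple] at hμ
    exact absurd (hμ.1 ▸ sum_le_sum fun j _ => hμ.2 j) hlt.not_ge

theorem sum_compositions_prod_choose_sub_one_mul_choose (hn : 1 ≤ n) (hr : ∀ j, 1 ≤ r j) :
    ∑ μ ∈ (antidiagonalTuple (k + 1) n).filter (fun μ => ∀ j, 1 ≤ μ j),
        (∏ j, (μ j - 1).choose (r j - 1)) * (μ i + s - 1).choose s =
      (s + (r i - 1)).choose (r i - 1) * (n + s - 1).choose (∑ j, r j + s - 1) := by
  rw [← sum_filter_le_prod_choose_sub_one_mul_choose n s r i hn hr]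
  refine (sum_subset (fun μ hμ => ?_) fun μ hμ hμr => ?_).symm
  · simp only [mem_filter] at hμ ⊢
    exact ⟨hμ.1, fun j => (hr j).trans (hμ.2 j)⟩
  · simp only [mem_filter, not_and, not_forall, not_le] at hμ hμr
    obtain ⟨j, hj⟩ := hμr hμ.1
    refine mul_eq_zero_of_left (prod_eq_zero (mem_univ j) ?_) _
    exact Nat.choose_eq_zero_of_lt (by have := hμ.2 j; omega)

end Compositions

theorem neg_one_pow_mul_gchoose_neg_sub_one (s k : ℕ) :
    (-1 : ℚ) ^ k * gchoose (-(s : ℚ) - 1) k = ((s + k).choose k : ℚ) := by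
  have hprod : ∏ i ∈ range k, (-(s : ℚ) - 1 - i) = (-1) ^ k * ((s + 1).ascFactorial k : ℚ) :=
    calc ∏ i ∈ range k, (-(s : ℚ) - 1 - i) = ∏ i ∈ range k, (-1) * ((s + 1 + i : ℕ) : ℚ) :=
          prod_congr rfl fun i _ => by push_cast; ring
      _ = (-1) ^ k * ((s + 1).ascFactorial k : ℚ) := by
          rw [prod_mul_distrib, prod_const, card_range, Nat.ascFactorial_eq_prod_range,
            Nat.cast_prod]
  have hfact : (s.factorial : ℚ) * (s + 1).ascFactorial k = (s + k).factorial := by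
    exact_mod_cast Nat.factorial_mul_ascFactorial s k
  rw [gchoose, hprod, ← Nat.choose_symm_add, Nat.cast_add_choose, ← hfact]
  field_simp
  rw [← pow_mul, mul_comm, pow_mul, neg_one_sq, one_pow]

theorem stmt2_general (l n s rtot : ℕ) (hn : 1 ≤ n)
    (r : Fin l → ℕ) (hrpos : ∀ j, 1 ≤ r j) (hrsum : ∑ j, r j = rtot) (i : Fin l) :
    (∑ μ ∈ (Finset.Nat.antidiagonalTuple l n).filter (fun μ => ∀ j, 1 ≤ μ j),
        ((∏ j, ((μ j - 1).choose (r j - 1) : ℚ)) * ((μ i + s - 1).choose s : ℚ))) =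
      (-1 : ℚ) ^ (r i - 1) * gchoose (-(s : ℚ) - 1) (r i - 1) *
        ((n + s - 1).choose (rtot + s - 1) : ℚ) := by
  obtain ⟨k, rfl⟩ := Nat.exists_eq_add_one_of_ne_zero i.pos.ne'
  subst hrsum
  rw [neg_one_pow_mul_gchoose_neg_sub_one]
  exact_mod_cast sum_compositions_prod_choose_sub_one_mul_choose n s r i hn hrpos

theorem stmt2 (l n s rtot : ℕ) (hl : 1 ≤ l) (hn : 1 ≤ n) (hs : 1 ≤ s) (hr : 1 ≤ rtot)
    (r : Fin l → ℕ) (hrpos : ∀ j, 1 ≤ r j) (hrsum : ∑ j, r j = rtot) (i : Fin l) :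
    (∑ μ ∈ (Finset.Nat.antidiagonalTuple l n).filter (fun μ => ∀ j, 1 ≤ μ j),
        ((∏ j, ((μ j - 1).choose (r j - 1) : ℚ)) * ((μ i + s - 1).choose s : ℚ))) =
      (-1 : ℚ) ^ (r i - 1) * gchoose (-(s : ℚ) - 1) (r i - 1) *
        ((n + s - 1).choose (rtot + s - 1) : ℚ) :=
  stmt2_general l n s rtot hn r hrpos hrsum i
end

section
/- For positive integers r and s, and an indeterminate X, the identity ∑_{l=1}^{r} (X^(l-1)/l!) · ∑_{r_1+...+r_l=r, r_j≥1} (1/(r_1···r_l)) · ∑_{i=1}^{l} (-1)^(r_i-1) · C(-s-1, r_i-1) = (1/s) · [C(X+r+s-1, r) - C(X+r-1, r)] holds as an identity of polynomials in X (equivalently, for all real X). -/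
/-!
Put `L = -log (1 - t) = ∑ tᵐ / m` and `B = ((1 - t)^(-s) - 1) / s`, whose `m`-th coefficient is
`(-1)^(m-1) C(-s-1, m-1) / m`. Since the summand is symmetric in the parts, the sum over
compositions of `r` into `l` parts is `l · [tʳ] B L^(l-1)`, so the left side is
`[tʳ] B exp (X L)`. Now `exp (X L) = (1 - t)^(-X)`: both sides `F` solve `(1 - t) F' = X F` with
`F 0 = 1`. Finally `(1 - t)^(-s) (1 - t)^(-X) = (1 - t)^(-(s + X))` and
`[tʳ] (1 - t)^(-x) = C(x + r - 1, r)`.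
-/

open PowerSeries Finset

/-- The generalized binomial coefficient `C(x, k) = x(x-1)⋯(x-k+1)/k!` for real `x`. -/
noncomputable def gchooseR (x : ℝ) (k : ℕ) : ℝ := (∏ i ∈ Finset.range k, (x - i)) / (Nat.factorial k)

section Compositions

variable {R : Type*} [CommSemiring R]

theorem coeff_prod_mk {l : ℕ} (f : Fin l → ℕ → R) (n : ℕ) :
    coeff n (∏ j, PowerSeries.mk (f j)) =
      ∑ rv ∈ Finset.Nat.antidiagonalTuple l n, ∏ j, f j (rv j) := by
  rw [coeff_prod, ← piAntidiag_univ_fin_eq_antidiagonalTuple, finsuppAntidiag, sum_map,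
    ← sum_attach (piAntidiag _ _)]
  simp [coeff_mk]

theorem sum_antidiagonalTuple_sum_mul_prod_erase (a b : ℕ → R) (l n : ℕ) :
    ∑ rv ∈ Finset.Nat.antidiagonalTuple l n,
        ∑ i, b (rv i) * ∏ j ∈ univ.erase i, a (rv j) =
      l * coeff n (PowerSeries.mk b * PowerSeries.mk a ^ (l - 1)) := by
  classical
  have single (i : Fin l) :
      ∑ rv ∈ Finset.Nat.antidiagonalTuple l n, b (rv i) * ∏ j ∈ univ.erase i, a (rv j) =
        coeff n (PowerSeries.mk b * PowerSeries.mk a ^ (l - 1)) := by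
    have hprod : ∏ j, PowerSeries.mk (Function.update (fun _ => a) i b j) =
        PowerSeries.mk b * PowerSeries.mk a ^ (l - 1) := by
      rw [← mul_prod_erase univ _ (mem_univ i), Function.update_self,
        prod_congr rfl fun j hj => by rw [Function.update_of_ne (ne_of_mem_erase hj)],
        prod_const, card_erase_of_mem (mem_univ i), card_univ, Fintype.card_fin]
    rw [← hprod, coeff_prod_mk]
    refine sum_congr rfl fun rv _ => ?_
    rw [← mul_prod_erase univ _ (mem_univ i), Function.update_self]
    exact congrArg _ (prod_congr rfl fun j hj => by rw [Function.update_of_ne (ne_of_mem_erase hj)])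
  rw [sum_comm, sum_congr rfl fun i _ => single i, sum_const, card_univ, Fintype.card_fin,
    nsmul_eq_mul]

end Compositions

theorem succ_mul_coeff_succ_of_one_sub_X_mul_derivative {R : Type*} [CommRing R] {f g : R⟦X⟧}
    (h : (1 - X) * d⁄dX R f = g) (n : ℕ) :
    (n + 1) * coeff (n + 1) f = n * coeff n f + coeff n g := by
  have hn := congrArg (coeff n) h
  rw [sub_mul, one_mul, map_sub, coeff_derivative] at hn
  rcases n with _ | n
  · simpa [mul_comm] using hn
  · rw [coeff_succ_X_mul, coeff_derivative] at hn
    push_cast at hn ⊢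
    linear_combination hn

/-- `(1 - X) ^ (-x)`. -/
noncomputable def invOneSubPowSeries (K : Type*) [Field K] [CharZero K] (x : K) : K⟦X⟧ :=
  rescale (-1) (binomialSeries K (-x))

/-- `-log (1 - X)`; its constant coefficient is `0⁻¹ = 0`. -/
noncomputable def logInvOneSub (K : Type*) [Field K] : K⟦X⟧ :=
  PowerSeries.mk fun n => (n : K)⁻¹

section Field

variable {K : Type*} [Field K] [CharZero K]

theorem Ring.choose_eq_prod_range_div (a : K) (n : ℕ) :
    Ring.choose a n = (∏ i ∈ range n, (a - i)) / n.factorial := by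
  rw [Ring.choose_eq_smul, ← Polynomial.aeval_eq_smeval, ← Polynomial.eval_map_algebraMap,
    algebraMap_int_eq, descPochhammer_map, descPochhammer_eval_eq_prod_range, smul_eq_mul,
    inv_mul_eq_div]

theorem gchooseR_eq_choose (x : ℝ) (k : ℕ) : gchooseR x k = Ring.choose x k :=
  (Ring.choose_eq_prod_range_div x k).symm

theorem Ring.choose_succ_mul (a : K) (n : ℕ) :
    Ring.choose a (n + 1) * (n + 1) = Ring.choose a n * (a - n) := by
  rw [choose_eq_prod_range_div, choose_eq_prod_range_div, prod_range_succ, Nat.factorial_succ]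
  have := Nat.cast_add_one_ne_zero (R := K) n
  have := Nat.cast_ne_zero (R := K) |>.mpr n.factorial_ne_zero
  push_cast
  field_simp

theorem Ring.succ_mul_choose_add (x : K) (n : ℕ) :
    (n + 1) * Ring.choose (x + n) (n + 1) = (x + n) * Ring.choose (x + n - 1) n := by
  rw [choose_eq_prod_range_div, choose_eq_prod_range_div, prod_range_succ', Nat.factorial_succ]
  have := Nat.cast_add_one_ne_zero (R := K) n
  have := Nat.cast_ne_zero (R := K) |>.mpr n.factorial_ne_zero
  push_cast
  field_simp
  rw [sub_zero, mul_comm]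
  congr 1
  exact prod_congr rfl fun i _ => by ring

theorem coeff_invOneSubPowSeries_eq_neg_one_pow_mul (x : K) (n : ℕ) :
    coeff n (invOneSubPowSeries K x) = (-1) ^ n * Ring.choose (-x) n := by
  rw [invOneSubPowSeries, coeff_rescale, binomialSeries_coeff, smul_eq_mul, mul_one]

theorem coeff_invOneSubPowSeries (x : K) (n : ℕ) :
    coeff n (invOneSubPowSeries K x) = Ring.choose (x + n - 1) n := by
  rw [coeff_invOneSubPowSeries_eq_neg_one_pow_mul, Ring.choose_neg, Units.smul_def, zsmul_eq_mul,
    Int.cast_negOnePow_natCast, ← mul_assoc, ← mul_pow, neg_one_mul, neg_neg, one_pow, one_mul]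

theorem invOneSubPowSeries_add (x y : K) :
    invOneSubPowSeries K (x + y) = invOneSubPowSeries K x * invOneSubPowSeries K y := by
  rw [invOneSubPowSeries, neg_add, binomialSeries_add, map_mul]
  rfl

theorem eq_coeff_invOneSubPowSeries_of_succ_mul (x : K) {f : ℕ → K} (h0 : f 0 = 1)
    (hf : ∀ n : ℕ, (n + 1) * f (n + 1) = (x + n) * f n) (n : ℕ) :
    f n = coeff n (invOneSubPowSeries K x) := by
  induction n with
  | zero => simp [h0, coeff_invOneSubPowSeries]
  | succ n ih =>
    refine mul_left_cancel₀ (Nat.cast_add_one_ne_zero (R := K) n) ?_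
    rw [hf, ih, coeff_invOneSubPowSeries, coeff_invOneSubPowSeries, Nat.cast_add_one,
      ← add_assoc, add_sub_cancel_right, Ring.succ_mul_choose_add]

theorem derivative_logInvOneSub : d⁄dX K (logInvOneSub K) = PowerSeries.mk 1 := by
  ext n
  rw [coeff_derivative, logInvOneSub, coeff_mk, coeff_mk, Pi.one_apply, Nat.cast_add_one,
    inv_mul_cancel₀ (Nat.cast_add_one_ne_zero n)]

theorem one_sub_X_mul_derivative_logInvOneSub_pow (k : ℕ) :
    (1 - X) * d⁄dX K (logInvOneSub K ^ (k + 1)) = ((k : K) + 1) • logInvOneSub K ^ k := by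
  rw [Derivation.leibniz_pow, Nat.add_sub_cancel, smul_eq_mul, mul_smul_comm, mul_left_comm,
    derivative_logInvOneSub, mul_comm (1 - X), mk_one_mul_one_sub_eq_one, mul_one,
    ← Nat.cast_smul_eq_nsmul K, Nat.cast_add_one]

theorem succ_mul_coeff_succ_logInvOneSub_pow (k n : ℕ) :
    (n + 1) * coeff (n + 1) (logInvOneSub K ^ k) =
      n * coeff n (logInvOneSub K ^ k) + k * coeff n (logInvOneSub K ^ (k - 1)) := by
  rcases k with _ | k
  · rcases n with _ | n <;> simp [coeff_one]
  · rw [succ_mul_coeff_succ_of_one_sub_X_mul_derivative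
      (one_sub_X_mul_derivative_logInvOneSub_pow k) n, coeff_smul, smul_eq_mul,
      Nat.add_sub_cancel, Nat.cast_add_one]

theorem X_pow_dvd_logInvOneSub_pow (k : ℕ) : X ^ k ∣ logInvOneSub K ^ k :=
  pow_dvd_pow_of_dvd (X_dvd_iff.mpr (by simp [logInvOneSub])) k

theorem coeff_logInvOneSub_pow_of_lt {n k : ℕ} (h : n < k) : coeff n (logInvOneSub K ^ k) = 0 :=
  X_pow_dvd_iff.mp (X_pow_dvd_logInvOneSub_pow k) n h

theorem coeff_mul_logInvOneSub_pow_self {B : K⟦X⟧} (hB : constantCoeff B = 0) (n : ℕ) :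
    coeff n (B * logInvOneSub K ^ n) = 0 := by
  have hdvd : X ^ (n + 1) ∣ B * logInvOneSub K ^ n := by
    rw [pow_succ']
    exact mul_dvd_mul (X_dvd_iff.mpr hB) (X_pow_dvd_logInvOneSub_pow n)
  exact X_pow_dvd_iff.mp hdvd n n.lt_succ_self

theorem sum_compositions_inv_prod_mul_sum (c : ℕ → K) (l n : ℕ) :
    ∑ rv ∈ (Finset.Nat.antidiagonalTuple l n).filter (fun rv => ∀ j, 1 ≤ rv j),
        (1 / ∏ j, (rv j : K)) * ∑ i, c (rv i) =
      l * coeff n (PowerSeries.mk (fun m => (m : K)⁻¹ * c m) * logInvOneSub K ^ (l - 1)) := by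
  have hfilter : ∀ rv ∈ Finset.Nat.antidiagonalTuple l n,
      (1 / ∏ j, (rv j : K)) * ∑ i, c (rv i) ≠ 0 → ∀ j, 1 ≤ rv j := by
    intro rv _ hne j
    by_contra! hj
    rw [prod_eq_zero (mem_univ j) (by simp [Nat.lt_one_iff.mp hj]), div_zero, zero_mul] at hne
    exact hne rfl
  rw [sum_filter_of_ne hfilter, logInvOneSub,
    ← sum_antidiagonalTuple_sum_mul_prod_erase (fun m => (m : K)⁻¹)]
  refine sum_congr rfl fun rv _ => ?_
  rw [one_div, ← prod_inv_distrib, mul_sum]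
  refine sum_congr rfl fun i _ => ?_
  rw [← mul_prod_erase univ _ (mem_univ i)]
  ring

theorem sum_range_mul_coeff_logInvOneSub_pow_of_lt (g : ℕ → K) {n m : ℕ} (h : n < m) :
    ∑ k ∈ range m, g k * coeff n (logInvOneSub K ^ k) =
      ∑ k ∈ range (n + 1), g k * coeff n (logInvOneSub K ^ k) := by
  refine (sum_subset (range_subset_range.mpr h) fun k _ hk => ?_).symm
  rw [coeff_logInvOneSub_pow_of_lt (by simpa using hk), mul_zero]

/-- The `n`-th coefficient of `exp (x · logInvOneSub K)` is that of `(1 - X) ^ (-x)`. -/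
theorem coeff_invOneSubPowSeries_eq_sum (x : K) (n : ℕ) :
    coeff n (invOneSubPowSeries K x) =
      ∑ k ∈ range (n + 1), x ^ k / k.factorial * coeff n (logInvOneSub K ^ k) := by
  refine (eq_coeff_invOneSubPowSeries_of_succ_mul x (f := fun n => ∑ k ∈ range (n + 1),
    x ^ k / k.factorial * coeff n (logInvOneSub K ^ k)) (by simp) (fun n => ?_) n).symm
  set c : ℕ → K := fun k => x ^ k / k.factorial * coeff n (logInvOneSub K ^ k)
  have shift : ∑ k ∈ range (n + 2), x ^ k / k.factorial *
      (k * coeff n (logInvOneSub K ^ (k - 1))) = x * ∑ k ∈ range (n + 1), c k := by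
    rw [sum_range_succ', mul_sum, Nat.cast_zero, zero_mul, mul_zero, add_zero]
    refine sum_congr rfl fun k _ => ?_
    have := Nat.cast_add_one_ne_zero (R := K) k
    have := Nat.cast_ne_zero (R := K) |>.mpr k.factorial_ne_zero
    simp only [c, Nat.add_sub_cancel, Nat.factorial_succ]
    push_cast
    field_simp
    ring
  calc (n + 1 : K) * ∑ k ∈ range (n + 1 + 1),
          x ^ k / k.factorial * coeff (n + 1) (logInvOneSub K ^ k)
      = ∑ k ∈ range (n + 2), (n * c k + x ^ k / k.factorial *
          (k * coeff n (logInvOneSub K ^ (k - 1)))) := by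
        rw [mul_sum]
        refine sum_congr rfl fun k _ => ?_
        rw [mul_left_comm, succ_mul_coeff_succ_logInvOneSub_pow]
        ring
    _ = (x + n) * ∑ k ∈ range (n + 1), c k := by
        rw [sum_add_distrib, shift, ← mul_sum,
          sum_range_mul_coeff_logInvOneSub_pow_of_lt _ (by omega : n < n + 2)]
        ring

theorem coeff_mul_invOneSubPowSeries (B : K⟦X⟧) (x : K) (n : ℕ) :
    coeff n (B * invOneSubPowSeries K x) =
      ∑ k ∈ range (n + 1), x ^ k / k.factorial * coeff n (B * logInvOneSub K ^ k) := by
  simp only [coeff_mul, mul_sum]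
  rw [sum_comm]
  refine sum_congr rfl fun pq hpq => ?_
  rw [coeff_invOneSubPowSeries_eq_sum, ← sum_range_mul_coeff_logInvOneSub_pow_of_lt _
    (Nat.lt_succ_of_le (Finset.HasAntidiagonal.antidiagonal.snd_le hpq)), mul_sum]
  exact sum_congr rfl fun k _ => by ring

theorem mk_inv_mul_neg_one_pow_mul_choose {s : K} (hs : s ≠ 0) :
    PowerSeries.mk (fun m => (m : K)⁻¹ * ((-1) ^ (m - 1) * Ring.choose (-s - 1) (m - 1))) =
      s⁻¹ • (invOneSubPowSeries K s - 1) := by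
  ext (_ | m)
  · rw [coeff_mk, coeff_smul, map_sub, coeff_invOneSubPowSeries, coeff_one, if_pos rfl]
    simp
  · have hm := Nat.cast_add_one_ne_zero (R := K) m
    have hchoose := Ring.choose_succ_mul (s + m) m
    rw [coeff_mk, Nat.add_sub_cancel, neg_sub_left, add_comm 1 s,
      ← coeff_invOneSubPowSeries_eq_neg_one_pow_mul, coeff_invOneSubPowSeries, coeff_smul,
      map_sub, coeff_one, if_neg m.succ_ne_zero, sub_zero, coeff_invOneSubPowSeries,
      smul_eq_mul]
    push_cast at hchoose ⊢
    rw [show s + 1 + m - 1 = s + m by ring, show s + (m + 1) - 1 = s + m by ring]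
    field_simp
    linear_combination -hchoose

end Field

theorem stmt3_general (r s : ℕ) (hs : 1 ≤ s) (X : ℝ) :
    (∑ l ∈ Finset.Icc 1 r, (X ^ (l - 1) / (Nat.factorial l : ℝ)) *
        ∑ rv ∈ (Finset.Nat.antidiagonalTuple l r).filter (fun rv => ∀ j, 1 ≤ rv j),
          (1 / ∏ j, (rv j : ℝ)) *
            ∑ i, (-1 : ℝ) ^ (rv i - 1) * gchooseR (-(s : ℝ) - 1) (rv i - 1)) =
      (1 / (s : ℝ)) * (gchooseR (X + r + s - 1) r - gchooseR (X + r - 1) r) := by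
  set B : ℝ⟦X⟧ := PowerSeries.mk fun m =>
    (m : ℝ)⁻¹ * ((-1) ^ (m - 1) * Ring.choose (-(s : ℝ) - 1) (m - 1)) with hB_def
  have hB : B = (s : ℝ)⁻¹ • (invOneSubPowSeries ℝ s - 1) :=
    mk_inv_mul_neg_one_pow_mul_choose (Nat.cast_ne_zero.mpr (Nat.one_le_iff_ne_zero.mp hs))
  have hB_top : coeff r (B * logInvOneSub ℝ ^ r) = 0 :=
    coeff_mul_logInvOneSub_pow_self (by simp [hB_def]) r
  simp only [gchooseR_eq_choose]
  calc _ = ∑ l ∈ Icc 1 r,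
          X ^ (l - 1) / l.factorial * (l * coeff r (B * logInvOneSub ℝ ^ (l - 1))) :=
        sum_congr rfl fun l _ => congrArg _ (sum_compositions_inv_prod_mul_sum
          (fun m => (-1) ^ (m - 1) * Ring.choose (-(s : ℝ) - 1) (m - 1)) l r)
    _ = ∑ k ∈ range (r + 1), X ^ k / k.factorial * coeff r (B * logInvOneSub ℝ ^ k) := by
        rw [sum_range_succ, hB_top, mul_zero, add_zero, ← Ico_add_one_right_eq_Icc,
          sum_Ico_eq_sum_range]
        refine sum_congr rfl fun k _ => ?_
        rw [add_comm 1 k, Nat.add_sub_cancel, Nat.factorial_succ]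
        push_cast
        field_simp
    _ = coeff r (B * invOneSubPowSeries ℝ X) := (coeff_mul_invOneSubPowSeries B X r).symm
    _ = _ := by
        rw [hB, smul_mul_assoc, sub_mul, one_mul, ← invOneSubPowSeries_add, coeff_smul, map_sub,
          coeff_invOneSubPowSeries, coeff_invOneSubPowSeries, smul_eq_mul, one_div,
          show (s : ℝ) + X + r - 1 = X + r + s - 1 by ring]

theorem stmt3 (r s : ℕ) (hr : 1 ≤ r) (hs : 1 ≤ s) (X : ℝ) :
    (∑ l ∈ Finset.Icc 1 r, (X ^ (l - 1) / (Nat.factorial l : ℝ)) *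
        ∑ rv ∈ (Finset.Nat.antidiagonalTuple l r).filter (fun rv => ∀ j, 1 ≤ rv j),
          (1 / ∏ j, (rv j : ℝ)) *
            ∑ i, (-1 : ℝ) ^ (rv i - 1) * gchooseR (-(s : ℝ) - 1) (rv i - 1)) =
      (1 / (s : ℝ)) * (gchooseR (X + r + s - 1) r - gchooseR (X + r - 1) r) :=
  stmt3_general r s hs X
end

section
/- For positive integers n and s, the specialization r = n of Lassalle's identity gives ∑_{|μ|=n} X^(l(μ)-1)/z_μ · ∑_{i=1}^{l(μ)} (μ_i)_s = (s-1)!·[C(X+n+s-1, n) - C(X+n-1, n)], since P(μ, n) = 1 for all partitions μ of n. -/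
/-- The rising factorial `(a)_s = a(a+1)⋯(a+s-1)`. -/
def asc (a s : ℕ) : ℕ := ∏ j ∈ Finset.range s, (a + j)

/-- The number of ways to choose `r` distinct cells from the diagram with row lengths
given by the list `L`, taking at least one cell from each row. -/
def P (L : List ℕ) (r : ℕ) : ℕ :=
  (Finset.univ.filter fun S : Finset (Σ i : Fin L.length, Fin (L.get i)) =>
    S.card = r ∧ ∀ i, ∃ c ∈ S, c.1 = i).card

/-- `z_μ = ∏_{i≥1} i^{m_i(μ)} m_i(μ)!`. -/
def zmu {n : ℕ} (μ : Nat.Partition n) : ℕ :=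
  ∏ i ∈ Finset.range (n + 1), i ^ (μ.parts.count i) * Nat.factorial (μ.parts.count i)

open Finset

lemma gchooseR_zero (x : ℝ) : gchooseR x 0 = 1 := by simp [gchooseR]

lemma gchooseR_pascal (x : ℝ) (k : ℕ) :
    gchooseR x k + gchooseR x (k + 1) = gchooseR (x + 1) (k + 1) := by
  have hk : (Nat.factorial k : ℝ) ≠ 0 := by positivity
  have h1 : (∏ i ∈ range (k+1), (x + 1 - i)) = (∏ i ∈ range k, (x - i)) * (x + 1) := by
    rw [prod_range_succ', Nat.cast_zero, sub_zero]
    congr 1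
    apply prod_congr rfl
    intro i _
    push_cast
    ring
  rw [gchooseR, gchooseR, gchooseR, h1, prod_range_succ]
  rw [Nat.factorial_succ]
  push_cast
  field_simp
  ring

lemma gchooseR_hockey (X : ℝ) (M : ℕ) :
    ∑ m ∈ range (M + 1), gchooseR (X + m - 1) m = gchooseR (X + M) M := by
  induction M with
  | zero => simp [gchooseR]
  | succ M ih =>
    rw [sum_range_succ, ih]
    have : X + (M + 1 : ℕ) - 1 = X + M := by push_cast; ring
    rw [this]
    have := gchooseR_pascal (X + M) M
    rw [this]
    congr 1
    push_cast; ring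

/-- `X * C(X+n-1, n-1) = n * C(X+n-1, n)` for `n ≥ 1`. -/
lemma gchooseR_absorb (X : ℝ) (n : ℕ) (hn : 1 ≤ n) :
    X * gchooseR (X + n - 1) (n - 1) = n * gchooseR (X + n - 1) n := by
  obtain ⟨m, rfl⟩ := Nat.exists_eq_add_of_le hn
  simp only [Nat.add_sub_cancel_left] at *
  rw [Nat.add_comm 1 m]
  have h1 : (∏ i ∈ range (m+1), (X + (m+1:ℕ) - 1 - i)) =
      (∏ i ∈ range m, (X + (m+1:ℕ) - 1 - i)) * X := by
    rw [prod_range_succ]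
    congr 1
    push_cast; ring
  simp only [gchooseR, Nat.add_sub_cancel]
  rw [h1, Nat.factorial_succ]
  have hm : (Nat.factorial m : ℝ) ≠ 0 := by positivity
  push_cast
  field_simp

lemma gchooseR_diag_zero (k : ℕ) (hk : 1 ≤ k) : gchooseR ((k : ℝ) - 1) k = 0 := by
  rw [gchooseR]
  rw [div_eq_zero_iff]
  left
  apply prod_eq_zero (i := k - 1) (by simp; omega)
  have : ((k - 1 : ℕ) : ℝ) = (k : ℝ) - 1 := by
    push_cast [Nat.cast_sub hk]; ring
  rw [this]; ring

/-- Reindexing `k ↦ n - k` over `Icc a n`. -/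
lemma sum_Icc_reflect (a n : ℕ) (g : ℕ → ℝ) (h : a ≤ n) :
    ∑ k ∈ Icc a n, g (n - k) = ∑ m ∈ range (n - a + 1), g m := by
  apply Finset.sum_nbij' (i := fun k => n - k) (j := fun m => n - m)
  · intro k hk; simp at hk ⊢; omega
  · intro m hm; simp at hm ⊢; omega
  · intro k hk; simp at hk ⊢; omega
  · intro m hm; simp at hm ⊢; omega
  · intro k hk; rfl

/-- Chu–Vandermonde convolution. -/
lemma gchooseR_vandermonde (s : ℕ) : ∀ (n : ℕ) (X : ℝ),
    ∑ k ∈ range (n + 1), gchooseR ((k : ℝ) + s - 1) k * gchooseR (X + (n - k : ℕ) - 1) (n - k)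
      = gchooseR (X + s + n - 1) n := by
  induction s with
  | zero =>
    intro n X
    rw [sum_range_succ' _ n]
    have h0 : ∀ k ∈ range n, gchooseR ((k + 1 : ℕ) + (0:ℕ) - 1) (k + 1) *
        gchooseR (X + (n - (k+1) : ℕ) - 1) (n - (k+1)) = 0 := by
      intro k hk
      have : ((k + 1 : ℕ) : ℝ) + (0:ℕ) - 1 = ((k+1 : ℕ) : ℝ) - 1 := by push_cast; ring
      rw [this, gchooseR_diag_zero (k+1) (by omega), zero_mul]
    rw [sum_congr rfl h0]
    simp [gchooseR_zero]
  | succ s ih =>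
    intro n X
    have hc : ∀ k : ℕ, gchooseR ((k : ℝ) + (s+1:ℕ) - 1) k
        = ∑ j ∈ range (k + 1), gchooseR ((j : ℝ) + s - 1) j := by
      intro k
      have := gchooseR_hockey (s : ℝ) k
      have e1 : ((k : ℝ) + (s+1:ℕ) - 1) = (s : ℝ) + k := by push_cast; ring
      rw [e1, ← this]
      apply sum_congr rfl
      intro j _
      congr 1
      ring
    calc ∑ k ∈ range (n + 1), gchooseR ((k : ℝ) + (s+1:ℕ) - 1) k *
            gchooseR (X + (n - k : ℕ) - 1) (n - k)
        = ∑ k ∈ range (n + 1), ∑ j ∈ range (k + 1),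
            gchooseR ((j : ℝ) + s - 1) j * gchooseR (X + (n - k : ℕ) - 1) (n - k) := by
          apply sum_congr rfl; intro k _; rw [hc, sum_mul]
      _ = ∑ j ∈ range (n + 1), ∑ k ∈ Icc j n,
            gchooseR ((j : ℝ) + s - 1) j * gchooseR (X + (n - k : ℕ) - 1) (n - k) := by
          apply Finset.sum_comm'
          intro k j
          simp only [mem_range, mem_Icc]
          omega
      _ = ∑ j ∈ range (n + 1), gchooseR ((j : ℝ) + s - 1) j *
            gchooseR ((X + 1) + (n - j : ℕ) - 1) (n - j) := by
          apply sum_congr rfl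
          intro j hj
          rw [← mul_sum]
          congr 1
          have hjn : j ≤ n := by simp at hj; omega
          rw [sum_Icc_reflect j n (fun m => gchooseR (X + m - 1) m) hjn,
            gchooseR_hockey X (n - j)]
          congr 1
          ring
      _ = gchooseR (X + 1 + s + n - 1) n := ih n (X + 1)
      _ = gchooseR (X + (s+1:ℕ) + n - 1) n := by congr 1; push_cast; ring


lemma factorial_mul_asc (a : ℕ) (ha : 1 ≤ a) :
    ∀ b : ℕ, Nat.factorial (a - 1) * asc a b = Nat.factorial (a + b - 1) := by
  intro b
  induction b with
  | zero => simp [asc]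
  | succ b ih =>
    have h1 : asc a (b + 1) = asc a b * (a + b) := by rw [asc, asc, prod_range_succ]
    have h2 : a + (b + 1) - 1 = (a + b - 1) + 1 := by omega
    rw [h1, h2, Nat.factorial_succ, ← mul_assoc, ih]
    have : a + b - 1 + 1 = a + b := by omega
    rw [this, mul_comm]

lemma asc_key (k s : ℕ) (hk : 1 ≤ k) (hs : 1 ≤ s) :
    asc k s * Nat.factorial k = k * (Nat.factorial (s - 1) * asc s k) := by
  have h1 := factorial_mul_asc k hk s
  have h2 := factorial_mul_asc s hs k
  have h3 : Nat.factorial k = k * Nat.factorial (k - 1) := by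
    obtain ⟨m, rfl⟩ := Nat.exists_eq_add_of_le hk
    rw [Nat.add_comm 1 m, Nat.factorial_succ]
    simp
  rw [h3]
  calc asc k s * (k * Nat.factorial (k-1)) = k * (Nat.factorial (k-1) * asc k s) := by ring
    _ = k * Nat.factorial (k + s - 1) := by rw [h1]
    _ = k * Nat.factorial (s + k - 1) := by rw [Nat.add_comm k s]
    _ = k * (Nat.factorial (s-1) * asc s k) := by rw [h2]

lemma gchooseR_nat_arg (k s : ℕ) :
    gchooseR ((k : ℝ) + s - 1) k = (asc s k : ℝ) / Nat.factorial k := by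
  rw [gchooseR]
  congr 1
  rw [asc]
  push_cast
  rw [← Finset.prod_range_reflect (fun j => (s : ℝ) + j) k]
  apply prod_congr rfl
  intro j hj
  simp at hj
  have : ((k - 1 - j : ℕ) : ℝ) = (k : ℝ) - 1 - j := by
    have h1 : j ≤ k - 1 := by omega
    push_cast [Nat.cast_sub h1, Nat.cast_sub (by omega : 1 ≤ k)]
    ring
  rw [this]
  ring

/-- `(asc k s)/k = (s-1)! * C(k+s-1, k)` in ℝ. -/
lemma asc_div_eq (k s : ℕ) (hk : 1 ≤ k) (hs : 1 ≤ s) :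
    (asc k s : ℝ) / k = (Nat.factorial (s - 1) : ℝ) * gchooseR ((k : ℝ) + s - 1) k := by
  rw [gchooseR_nat_arg]
  have hkne : (k : ℝ) ≠ 0 := by positivity
  have hfne : (Nat.factorial k : ℝ) ≠ 0 := by positivity
  have := asc_key k s hk hs
  have hcast : (asc k s : ℝ) * Nat.factorial k = k * (Nat.factorial (s-1) * asc s k) := by
    exact_mod_cast congrArg (Nat.cast : ℕ → ℝ) this
  field_simp
  linarith [hcast]

/-- The local factor of `zmu`. -/
def zf (p : Multiset ℕ) (i : ℕ) : ℕ := i ^ p.count i * Nat.factorial (p.count i)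

/-- `zmu` as a product over the support. -/
def Zf (p : Multiset ℕ) : ℕ := ∏ i ∈ p.toFinset, zf p i

lemma mem_le_sum {p : Multiset ℕ} {k : ℕ} (h : k ∈ p) : k ≤ p.sum := by
  have := Multiset.cons_erase h
  have h2 : p.sum = k + (p.erase k).sum := by
    conv_lhs => rw [← this]
    simp
  omega

lemma zmu_eq_Zf {n : ℕ} (μ : Nat.Partition n) : zmu μ = Zf μ.parts := by
  rw [zmu, Zf]
  apply (Finset.prod_subset ?_ ?_).symm
  · intro i hi
    rw [Multiset.mem_toFinset] at hi
    have h1 : i ≤ n := by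
      have := mem_le_sum hi
      rw [μ.parts_sum] at this
      exact this
    simp
    omega
  · intro i _ hi
    rw [Multiset.mem_toFinset] at hi
    have : μ.parts.count i = 0 := Multiset.count_eq_zero.2 hi
    simp [zf, this]

lemma Zf_cons (a : ℕ) (p : Multiset ℕ) :
    Zf (a ::ₘ p) = a * (p.count a + 1) * Zf p := by
  classical
  have hmem : a ∈ (a ::ₘ p).toFinset := by simp
  have hga : zf (a ::ₘ p) a = a * (p.count a + 1) * zf p a := by
    simp only [zf, Multiset.count_cons_self, pow_succ, Nat.factorial_succ]
    ring
  have hrest : ∀ i ∈ (a ::ₘ p).toFinset.erase a, zf (a ::ₘ p) i = zf p i := by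
    intro i hi
    have hne : i ≠ a := Finset.ne_of_mem_erase hi
    simp [zf, Multiset.count_cons_of_ne hne]
  rw [Zf, ← Finset.mul_prod_erase _ _ hmem, hga, Finset.prod_congr rfl hrest]
  have herase : (a ::ₘ p).toFinset.erase a = p.toFinset.erase a := by
    rw [Multiset.toFinset_cons, Finset.erase_insert_eq_erase]
  rw [herase]
  by_cases ha : a ∈ p.toFinset
  · rw [Zf, ← Finset.mul_prod_erase _ _ ha]; ring
  · have h0 : p.count a = 0 := by
      rw [Multiset.count_eq_zero]
      rwa [Multiset.mem_toFinset] at ha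
    rw [Finset.erase_eq_of_notMem ha, Zf]
    simp [zf, h0]
    exact Or.inl rfl

lemma zmu_pos {n : ℕ} (μ : Nat.Partition n) : 0 < zmu μ := by
  rw [zmu_eq_Zf, Zf]
  apply Finset.prod_pos
  intro i hi
  rw [Multiset.mem_toFinset] at hi
  have hipos : 0 < i := μ.parts_pos hi
  have : 0 < i ^ μ.parts.count i := pow_pos hipos _
  exact Nat.mul_pos this (Nat.factorial_pos _)

/-- the power-sum weight `A`. -/
noncomputable def Aw (m : ℕ) (X : ℝ) : ℝ :=
  ∑ ν : Nat.Partition m, X ^ (Multiset.card ν.parts) / zmu ν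

lemma Aw_zero (X : ℝ) : Aw 0 X = 1 := by
  rw [Aw]
  rw [Fintype.sum_eq_single (default : Nat.Partition 0)]
  · have hp : (default : Nat.Partition 0).parts = 0 := by
      apply Multiset.eq_zero_of_forall_notMem
      intro x hx
      have hpos := (default : Nat.Partition 0).parts_pos hx
      have hle := mem_le_sum hx
      rw [(default : Nat.Partition 0).parts_sum] at hle
      omega
    simp [zmu_eq_Zf, Zf, hp]
  · intro ν hν
    exact absurd (Subsingleton.elim ν default) hν

def insPart (n k : ℕ) (hk1 : 1 ≤ k) (hkn : k ≤ n) (ν : Nat.Partition (n - k)) :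
    Nat.Partition n where
  parts := k ::ₘ ν.parts
  parts_pos := by
    intro i hi
    rcases Multiset.mem_cons.1 hi with h | h
    · omega
    · exact ν.parts_pos h
  parts_sum := by rw [Multiset.sum_cons, ν.parts_sum]; omega

def delPart (n k : ℕ) (μ : Nat.Partition n) : Nat.Partition (n - k) :=
  if h : k ∈ μ.parts then
    { parts := μ.parts.erase k
      parts_pos := fun hi => μ.parts_pos (Multiset.mem_of_mem_erase hi)
      parts_sum := by
        have hc := Multiset.cons_erase h
        have h2 : μ.parts.sum = k + (μ.parts.erase k).sum := by
          conv_lhs => rw [← hc]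
          simp
        have h3 := μ.parts_sum
        omega }
  else default

lemma sum_count_mul (n k : ℕ) (hk1 : 1 ≤ k) (hkn : k ≤ n) (X : ℝ) :
    ∑ μ : Nat.Partition n, (μ.parts.count k : ℝ) *
        (X ^ (Multiset.card μ.parts - 1) / zmu μ)
      = (1 / k) * Aw (n - k) X := by
  classical
  have hstep : ∑ μ : Nat.Partition n, (μ.parts.count k : ℝ) *
        (X ^ (Multiset.card μ.parts - 1) / zmu μ)
      = ∑ μ ∈ Finset.univ.filter (fun μ : Nat.Partition n => k ∈ μ.parts),
          (μ.parts.count k : ℝ) * (X ^ (Multiset.card μ.parts - 1) / zmu μ) := by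
    symm
    apply Finset.sum_filter_of_ne
    intro μ _ hne
    by_contra h
    have : μ.parts.count k = 0 := Multiset.count_eq_zero.2 h
    rw [this] at hne
    simp at hne
  rw [hstep, Aw, Finset.mul_sum]
  symm
  apply Finset.sum_bij' (i := fun ν _ => insPart n k hk1 hkn ν)
    (j := fun μ _ => delPart n k μ)
  · intro ν _
    simp only [Finset.mem_filter, Finset.mem_univ, true_and, insPart]
    exact Multiset.mem_cons_self _ _
  · intro μ _
    exact Finset.mem_univ _
  · intro ν _
    apply Nat.Partition.ext
    have hmem : k ∈ (insPart n k hk1 hkn ν).parts := Multiset.mem_cons_self _ _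
    rw [delPart, dif_pos hmem]
    show (k ::ₘ ν.parts).erase k = ν.parts
    exact Multiset.erase_cons_head _ _
  · intro μ hμ
    rw [Finset.mem_filter] at hμ
    apply Nat.Partition.ext
    rw [delPart, dif_pos hμ.2]
    show k ::ₘ μ.parts.erase k = μ.parts
    exact Multiset.cons_erase hμ.2
  · intro ν _
    show (1:ℝ)/k * (X ^ (Multiset.card ν.parts) / zmu ν)
      = ((insPart n k hk1 hkn ν).parts.count k : ℝ) *
          (X ^ (Multiset.card (insPart n k hk1 hkn ν).parts - 1) / zmu (insPart n k hk1 hkn ν))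
    have hparts : (insPart n k hk1 hkn ν).parts = k ::ₘ ν.parts := rfl
    rw [hparts]
    rw [Multiset.count_cons_self]
    have hcard : Multiset.card (k ::ₘ ν.parts) - 1 = Multiset.card ν.parts := by
      rw [Multiset.card_cons]; omega
    rw [hcard]
    have hz : (zmu (insPart n k hk1 hkn ν) : ℝ)
        = (k : ℝ) * ((ν.parts.count k : ℝ) + 1) * zmu ν := by
      rw [zmu_eq_Zf, zmu_eq_Zf (μ := ν), hparts, Zf_cons]
      push_cast
      ring
    rw [hz]
    have h1 : (k : ℝ) ≠ 0 := by positivity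
    have h2 : ((ν.parts.count k : ℝ) + 1) ≠ 0 := by positivity
    have h3 : (zmu ν : ℝ) ≠ 0 := by exact_mod_cast (zmu_pos ν).ne'
    push_cast
    field_simp

lemma core (n : ℕ) (f : ℕ → ℝ) (X : ℝ) :
    ∑ μ : Nat.Partition n, (X ^ (Multiset.card μ.parts - 1) / zmu μ) * (μ.parts.map f).sum
      = ∑ k ∈ Icc 1 n, (f k / k) * Aw (n - k) X := by
  classical
  have h1 : ∀ μ : Nat.Partition n, ((μ.parts.map f).sum : ℝ)
      = ∑ k ∈ Finset.Icc 1 n, (μ.parts.count k : ℝ) * f k := by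
    intro μ
    rw [Finset.sum_multiset_map_count]
    rw [show ∑ m ∈ μ.parts.toFinset, μ.parts.count m • f m
        = ∑ m ∈ μ.parts.toFinset, (μ.parts.count m : ℝ) * f m from
      Finset.sum_congr rfl fun m _ => by rw [nsmul_eq_mul]]
    apply Finset.sum_subset
    · intro i hi
      rw [Multiset.mem_toFinset] at hi
      rw [Finset.mem_Icc]
      refine ⟨μ.parts_pos hi, ?_⟩
      have := mem_le_sum hi
      rw [μ.parts_sum] at this
      exact this
    · intro i _ hi
      rw [Multiset.mem_toFinset] at hi
      rw [Multiset.count_eq_zero.2 hi]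
      simp
  calc ∑ μ : Nat.Partition n, (X ^ (Multiset.card μ.parts - 1) / zmu μ) * (μ.parts.map f).sum
      = ∑ μ : Nat.Partition n, ∑ k ∈ Icc 1 n,
          (μ.parts.count k : ℝ) * (X ^ (Multiset.card μ.parts - 1) / zmu μ) * f k := by
        apply Finset.sum_congr rfl
        intro μ _
        rw [h1, Finset.mul_sum]
        apply Finset.sum_congr rfl
        intro k _
        ring
    _ = ∑ k ∈ Icc 1 n, ∑ μ : Nat.Partition n,
          (μ.parts.count k : ℝ) * (X ^ (Multiset.card μ.parts - 1) / zmu μ) * f k :=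
        Finset.sum_comm
    _ = ∑ k ∈ Icc 1 n, (f k / k) * Aw (n - k) X := by
        apply Finset.sum_congr rfl
        intro k hk
        rw [Finset.mem_Icc] at hk
        rw [← Finset.sum_mul, sum_count_mul n k hk.1 hk.2 X]
        ring

lemma Aw_eq : ∀ (n : ℕ) (X : ℝ), Aw n X = gchooseR (X + n - 1) n := by
  intro n
  induction n using Nat.strong_induction_on with
  | _ n ih =>
    intro X
    rcases Nat.eq_zero_or_pos n with rfl | hn
    · simp [Aw_zero, gchooseR]
    · -- card of parts is at least 1
      have hcard : ∀ μ : Nat.Partition n, 1 ≤ Multiset.card μ.parts := by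
        intro μ
        by_contra h
        have h0 : Multiset.card μ.parts = 0 := by omega
        rw [Multiset.card_eq_zero] at h0
        have := μ.parts_sum
        rw [h0] at this
        simp at this
        omega
      have hA : Aw n X = X * ∑ μ : Nat.Partition n,
          (X ^ (Multiset.card μ.parts - 1) / zmu μ) := by
        rw [Aw, Finset.mul_sum]
        apply Finset.sum_congr rfl
        intro μ _
        have hc1 : Multiset.card μ.parts = (Multiset.card μ.parts - 1) + 1 := by
          have := hcard μ; omega
        rw [show X ^ (Multiset.card μ.parts) = X * X ^ (Multiset.card μ.parts - 1) by
          conv_lhs => rw [hc1]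
          rw [pow_succ]; ring]
        ring
      -- use core with f = cast
      have hcore := core n (fun a => (a : ℝ)) X
      have hsum : ∀ μ : Nat.Partition n,
          (Multiset.map (fun a : ℕ => (a : ℝ)) μ.parts).sum = (n : ℝ) := by
        intro μ
        have h2 : ((μ.parts.sum : ℕ) : ℝ) = (n : ℝ) := by
          exact_mod_cast congrArg (Nat.cast : ℕ → ℝ) μ.parts_sum
        rw [← h2]
        push_cast
        simp [Multiset.map_map]
      have hnne : (n : ℝ) ≠ 0 := Nat.cast_ne_zero.2 hn.ne'
      have e0 : ∑ μ : Nat.Partition n, (X ^ (Multiset.card μ.parts - 1) / zmu μ) * (n : ℝ)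
          = ∑ k ∈ Icc 1 n, ((k : ℝ) / k) * Aw (n - k) X := by
        rw [← hcore]
        exact Finset.sum_congr rfl fun μ _ => by rw [hsum]
      have e1 : ∑ k ∈ Icc 1 n, ((k : ℝ) / k) * Aw (n - k) X
          = ∑ k ∈ Icc 1 n, Aw (n - k) X := by
        apply Finset.sum_congr rfl
        intro k hk
        rw [Finset.mem_Icc] at hk
        have : (k : ℝ) ≠ 0 := Nat.cast_ne_zero.2 (by omega)
        rw [div_self this, one_mul]
      have e2 : ∑ k ∈ Icc 1 n, Aw (n - k) X = gchooseR (X + (n - 1 : ℕ)) (n - 1) := by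
        rw [sum_Icc_reflect 1 n (fun m => Aw m X) hn]
        have e3 : ∀ m ∈ range (n - 1 + 1), Aw m X = gchooseR (X + m - 1) m := by
          intro m hm
          rw [mem_range] at hm
          exact ih m (by omega) X
        rw [Finset.sum_congr rfl e3, gchooseR_hockey X (n - 1)]
      have hS : ∑ μ : Nat.Partition n, X ^ (Multiset.card μ.parts - 1) / (zmu μ : ℝ)
          = (1 / n) * gchooseR (X + n - 1) (n - 1) := by
        have e4 : (n : ℝ) * ∑ μ : Nat.Partition n, X ^ (Multiset.card μ.parts - 1) / (zmu μ : ℝ)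
            = gchooseR (X + (n - 1 : ℕ)) (n - 1) := by
          rw [← e2, ← e1, ← e0, Finset.mul_sum]
          exact Finset.sum_congr rfl fun μ _ => by ring
        have e5 : ((n - 1 : ℕ) : ℝ) = (n : ℝ) - 1 := by
          push_cast [Nat.cast_sub hn]; ring
        rw [e5] at e4
        rw [show X + ((n:ℝ) - 1) = X + n - 1 by ring] at e4
        field_simp
        linarith [e4]
      calc Aw n X = X * ∑ μ : Nat.Partition n, X ^ (Multiset.card μ.parts - 1) / (zmu μ : ℝ) := hA
        _ = X * ((1 / n) * gchooseR (X + n - 1) (n - 1)) := by rw [hS]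
        _ = (1 / n) * (X * gchooseR (X + n - 1) (n - 1)) := by ring
        _ = (1 / n) * (n * gchooseR (X + n - 1) n) := by rw [gchooseR_absorb X n hn]
        _ = gchooseR (X + n - 1) n := by field_simp

lemma sum_Icc_one (n : ℕ) (g : ℕ → ℝ) : ∑ k ∈ Icc 1 n, g k = ∑ i ∈ range n, g (i + 1) := by
  apply Finset.sum_nbij' (i := fun k => k - 1) (j := fun i => i + 1)
  · intro k hk; simp at hk ⊢; omega
  · intro i hi; simp at hi ⊢; omega
  · intro k hk; simp at hk; omega
  · intro i hi; omega
  · intro k hk; simp at hk; congr 1; omega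

lemma P_eq_one (n : ℕ) (hn : 1 ≤ n) (μ : Nat.Partition n) : P μ.parts.toList n = 1 := by
  classical
  set L := μ.parts.toList with hL
  have hsum : L.sum = n := by rw [hL, Multiset.sum_toList, μ.parts_sum]
  have hcardC : Fintype.card (Σ i : Fin L.length, Fin (L.get i)) = n := by
    rw [Fintype.card_sigma]
    simp only [Fintype.card_fin]
    rw [← hsum]
    have := Fin.sum_univ_getElem L
    rw [← this]
    apply Finset.sum_congr rfl
    intro i _
    congr 1
  have hpos : ∀ i : Fin L.length, 0 < L.get i := by
    intro i
    apply μ.parts_pos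
    have h1 : L.get i ∈ L := by simpa using List.get_mem L i.1 i.2
    exact Multiset.mem_toList.mp h1
  rw [P]
  have hfilter : (Finset.univ.filter fun S : Finset (Σ i : Fin L.length, Fin (L.get i)) =>
      S.card = n ∧ ∀ i, ∃ c ∈ S, c.1 = i) = {Finset.univ} := by
    ext S
    simp only [Finset.mem_filter, Finset.mem_univ, true_and, Finset.mem_singleton]
    constructor
    · rintro ⟨hc, _⟩
      apply Finset.eq_univ_of_card
      rw [hc, hcardC]
    · rintro rfl
      refine ⟨by rw [Finset.card_univ, hcardC], ?_⟩
      intro i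
      exact ⟨⟨i, ⟨0, hpos i⟩⟩, Finset.mem_univ _, rfl⟩
  rw [hfilter, Finset.card_singleton]

theorem stmt16 (n s : ℕ) (hn : 1 ≤ n) (hs : 1 ≤ s) :
    (∀ μ : Nat.Partition n, P μ.parts.toList n = 1) ∧
      ∀ X : ℝ,
        (∑ μ : Nat.Partition n,
            X ^ (μ.parts.card - 1) / (zmu μ : ℝ) *
              ((μ.parts.map fun a => (asc a s : ℝ)).sum)) =
          (Nat.factorial (s - 1) : ℝ) *
            (gchooseR (X + n + s - 1) n - gchooseR (X + n - 1) n) := by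
  constructor
  · exact fun μ => P_eq_one n hn μ
  · intro X
    have hcore := core n (fun a => (asc a s : ℝ)) X
    rw [hcore]
    have hstep : ∀ k ∈ Icc 1 n, ((asc k s : ℝ) / k) * Aw (n - k) X
        = (Nat.factorial (s - 1) : ℝ) *
            (gchooseR ((k : ℝ) + s - 1) k * gchooseR (X + (n - k : ℕ) - 1) (n - k)) := by
      intro k hk
      rw [Finset.mem_Icc] at hk
      rw [asc_div_eq k s hk.1 hs, Aw_eq (n - k) X]
      ring
    rw [Finset.sum_congr rfl hstep, ← Finset.mul_sum]
    congr 1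
    have hvdm := gchooseR_vandermonde s n X
    have hsplit : ∑ k ∈ range (n + 1),
        gchooseR ((k : ℝ) + s - 1) k * gchooseR (X + (n - k : ℕ) - 1) (n - k)
      = gchooseR ((0 : ℝ) + s - 1) 0 * gchooseR (X + (n - 0 : ℕ) - 1) (n - 0)
        + ∑ k ∈ Icc 1 n, gchooseR ((k : ℝ) + s - 1) k * gchooseR (X + (n - k : ℕ) - 1) (n - k) := by
      rw [Finset.sum_range_succ' _ n, sum_Icc_one n
        (fun k => gchooseR ((k : ℝ) + s - 1) k * gchooseR (X + (n - k : ℕ) - 1) (n - k))]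
      push_cast
      ring
    rw [hvdm] at hsplit
    have h0 : gchooseR ((0 : ℝ) + s - 1) 0 * gchooseR (X + (n - 0 : ℕ) - 1) (n - 0)
        = gchooseR (X + n - 1) n := by
      rw [gchooseR_zero, one_mul, Nat.sub_zero]
    rw [h0] at hsplit
    have : ∑ k ∈ Icc 1 n, gchooseR ((k : ℝ) + s - 1) k * gchooseR (X + (n - k : ℕ) - 1) (n - k)
        = gchooseR (X + s + n - 1) n - gchooseR (X + n - 1) n := by linarith [hsplit]
    rw [this]
    congr 2
    ring
end
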